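/- arXiv:2107.08794 — 3 statements merged into one kernel-verified Lean document; each statement's English description precedes it below -/
import Mathlib

section
/- In the 5-bucket Cinderella game with capacity C = 3, the set W = {(b1,…,b5) | ∃ rotation index j: 0 ≤ b_j, b_{j+1} ≤ 3, 0 ≤ b_{j+2}, b_{j+3}, b_{j+4} ≤ 2, and b_{j+2} + b_{j+4} ≤ 3} (indices mod 5) is closed under the strategy 'empty buckets b_j and b_{j+1}': from any state in W, after the controller empties the two witnessing adjacent buckets and the environment adds any nonnegative amounts summing to 1, the resulting state is again in W. -/
/-- Controller move `j`: empty buckets `j` and `j+1` (mod 5), leave the others unchanged. -/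
def EmptyPair (j : Fin 5) (b b' : Fin 5 → ℝ) : Prop :=
  b' j = 0 ∧ b' (j + 1) = 0 ∧ ∀ i, i ≠ j → i ≠ j + 1 → b' i = b i

/-- Environment move: each bucket weakly increases and the total increases by exactly 1. -/
def EnvMove (b b' : Fin 5 → ℝ) : Prop :=
  (∀ i, b i ≤ b' i) ∧ (∑ i, b' i) = (∑ i, b i) + 1

/-- The witness set W from Table 1 (capacity 3). -/
def Wset : Set (Fin 5 → ℝ) :=
  {b | ∃ j : Fin 5, 0 ≤ b j ∧ b j ≤ 3 ∧ 0 ≤ b (j + 1) ∧ b (j + 1) ≤ 3 ∧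
    0 ≤ b (j + 2) ∧ b (j + 2) ≤ 2 ∧ 0 ≤ b (j + 3) ∧ b (j + 3) ≤ 2 ∧
    0 ≤ b (j + 4) ∧ b (j + 4) ≤ 2 ∧ b (j + 2) + b (j + 4) ≤ 3}

theorem wset_closed (b : Fin 5 → ℝ) (j : Fin 5)
    (hj : 0 ≤ b j ∧ b j ≤ 3 ∧ 0 ≤ b (j + 1) ∧ b (j + 1) ≤ 3 ∧
      0 ≤ b (j + 2) ∧ b (j + 2) ≤ 2 ∧ 0 ≤ b (j + 3) ∧ b (j + 3) ≤ 2 ∧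
      0 ≤ b (j + 4) ∧ b (j + 4) ≤ 2 ∧ b (j + 2) + b (j + 4) ≤ 3)
    (b' b'' : Fin 5 → ℝ) (hcon : EmptyPair j b b') (henv : EnvMove b' b'') :
    b'' ∈ Wset := by

  obtain ⟨hb0, hb1, hbr⟩ := hcon
  obtain ⟨hmono, hsum⟩ := henv
  obtain ⟨h1, h2, h3, h4, h5, h6, h7, h8, h9, h10, h11⟩ := hj
  have hne : ∀ k : Fin 5, k + 2 ≠ k ∧ k + 2 ≠ k + 1 ∧ k + 3 ≠ k ∧ k + 3 ≠ k + 1 ∧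
      k + 4 ≠ k ∧ k + 4 ≠ k + 1 := by decide
  obtain ⟨n1, n2, n3, n4, n5, n6⟩ := hne j
  have e2 : b' (j + 2) = b (j + 2) := hbr _ n1 n2
  have e3 : b' (j + 3) = b (j + 3) := hbr _ n3 n4
  have e4 : b' (j + 4) = b (j + 4) := hbr _ n5 n6
  have shift : ∀ f : Fin 5 → ℝ,
      ∑ i, f i = f j + f (j + 1) + f (j + 2) + f (j + 3) + f (j + 4) := by
    intro f
    have h := Fintype.sum_equiv (Equiv.addLeft j) (fun i => f (j + i)) f (fun i => rfl)
    rw [← h, Fin.sum_univ_five]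
    simp [Equiv.addLeft]
  have hsum' : b'' j + b'' (j + 1) + b'' (j + 2) + b'' (j + 3) + b'' (j + 4)
      = b' j + b' (j + 1) + b' (j + 2) + b' (j + 3) + b' (j + 4) + 1 := by
    rw [← shift, ← shift]; exact hsum
  have m0 := hmono j
  have m1 := hmono (j + 1)
  have m2 := hmono (j + 2)
  have m3 := hmono (j + 3)
  have m4 := hmono (j + 4)
  have hb'2 : 0 ≤ b' (j + 2) := by rw [e2]; exact h5
  have hb'3 : 0 ≤ b' (j + 3) := by rw [e3]; exact h7
  have hb'4 : 0 ≤ b' (j + 4) := by rw [e4]; exact h9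
  by_cases hx : b'' (j + 2) ≤ 2
  · -- witness j + 3
    have a1 : j + 3 + 1 = j + 4 := by rw [add_assoc]; rfl
    have a2 : ∀ k : Fin 5, k + 3 + 2 = k := by decide
    have a3 : ∀ k : Fin 5, k + 3 + 3 = k + 1 := by decide
    have a4 : ∀ k : Fin 5, k + 3 + 4 = k + 2 := by decide
    refine ⟨j + 3, ?_, ?_, ?_, ?_, ?_, ?_, ?_, ?_, ?_, ?_, ?_⟩ <;>
      (try simp only [a1, a2 j, a3 j, a4 j]) <;> linarith
  · -- witness j + 2
    have a1 : j + 2 + 1 = j + 3 := by rw [add_assoc]; rfl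
    have a2 : ∀ k : Fin 5, k + 2 + 2 = k + 4 := by decide
    have a3 : ∀ k : Fin 5, k + 2 + 3 = k := by decide
    have a4 : ∀ k : Fin 5, k + 2 + 4 = k + 1 := by decide
    refine ⟨j + 2, ?_, ?_, ?_, ?_, ?_, ?_, ?_, ?_, ?_, ?_, ?_⟩ <;>
      (try simp only [a1, a2 j, a3 j, a4 j]) <;> linarith
end

section
/- From the witness set W for the 5-bucket Cinderella game with C = 3, Cinderella wins: for every state in W, there exists a controller move (emptying two adjacent buckets) such that the resulting state is safe and every environment response (adding amounts summing to 1, each nonnegative) lands back in W; hence W ⊆ WP(W) ∩ G, so W is contained in the maximal winning region. -/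
def SafeSet : Set (Fin 5 → ℝ) := {b | ∀ i, 0 ≤ b i ∧ b i ≤ 3}

def WP5 (X : Set (Fin 5 → ℝ)) : Set (Fin 5 → ℝ) :=
  {b | ∃ j b', EmptyPair j b b' ∧ b' ∈ SafeSet ∧ ∀ b'', EnvMove b' b'' → b'' ∈ X}

lemma sum_rot (j : Fin 5) (f : Fin 5 → ℝ) :
    ∑ i, f i = f j + f (j+1) + f (j+2) + f (j+3) + f (j+4) := by
  fin_cases j <;> simp [Fin.sum_univ_five] <;> ring

lemma idx3 (j : Fin 5) : j+3+1 = j+4 ∧ j+3+2 = j ∧ j+3+3 = j+1 ∧ j+3+4 = j+2 := by revert j; decide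

lemma idx2 (j : Fin 5) : j+2+1 = j+3 ∧ j+2+2 = j+4 ∧ j+2+3 = j ∧ j+2+4 = j+1 := by revert j; decide

lemma ne_facts (j : Fin 5) :
    (j+2 ≠ j ∧ j+2 ≠ j+1) ∧ (j+3 ≠ j ∧ j+3 ≠ j+1) ∧ (j+4 ≠ j ∧ j+4 ≠ j+1) := by revert j; decide

lemma cover (i j : Fin 5) : i = j ∨ i = j+1 ∨ i = j+2 ∨ i = j+3 ∨ i = j+4 := by revert i j; decide

theorem cinderella_wins_from_W :
    (∀ b ∈ Wset, ∃ j b', EmptyPair j b b' ∧ b' ∈ SafeSet ∧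
      ∀ b'', EnvMove b' b'' → b'' ∈ Wset) ∧
    Wset ⊆ WP5 Wset ∩ SafeSet := by
  have main : ∀ b ∈ Wset, ∃ j b', EmptyPair j b b' ∧ b' ∈ SafeSet ∧
      ∀ b'', EnvMove b' b'' → b'' ∈ Wset := by
    rintro b ⟨j, h0, h0', h1, h1', h2, h2', h3, h3', h4, h4', h24⟩
    obtain ⟨⟨n2, n2'⟩, ⟨n3, n3'⟩, ⟨n4, n4'⟩⟩ := ne_facts j
    set b' : Fin 5 → ℝ := fun i => if i = j ∨ i = j + 1 then 0 else b i with hb'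
    have e0 : b' j = 0 := by simp [hb']
    have e1 : b' (j+1) = 0 := by simp [hb']
    have e2 : b' (j+2) = b (j+2) := by simp [hb', n2, n2']
    have e3 : b' (j+3) = b (j+3) := by simp [hb', n3, n3']
    have e4 : b' (j+4) = b (j+4) := by simp [hb', n4, n4']
    refine ⟨j, b', ⟨e0, e1, fun i hi hi' => by simp [hb', hi, hi']⟩, ?_, ?_⟩
    · intro i
      rcases cover i j with h | h | h | h | h <;> subst h <;>
        simp only [e0, e1, e2, e3, e4] <;> constructor <;> linarith
    · rintro b'' ⟨hle, hsum⟩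
      rw [sum_rot j b'', sum_rot j b', e0, e1, e2, e3, e4] at hsum
      have l0 := hle j; have l1 := hle (j+1); have l2 := hle (j+2)
      have l3 := hle (j+3); have l4 := hle (j+4)
      rw [e0] at l0; rw [e1] at l1; rw [e2] at l2; rw [e3] at l3; rw [e4] at l4
      by_cases hc : b'' (j+2) ≤ 2
      · refine ⟨j+3, ?_⟩
        obtain ⟨i1, i2, i3, i4⟩ := idx3 j
        rw [i1, i2, i3, i4]
        refine ⟨by linarith, by linarith, by linarith, by linarith, by linarith,
          by linarith, by linarith, by linarith, by linarith, by linarith, by linarith⟩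
      · refine ⟨j+2, ?_⟩
        obtain ⟨i1, i2, i3, i4⟩ := idx2 j
        rw [i1, i2, i3, i4]
        refine ⟨by linarith, by linarith, by linarith, by linarith, by linarith,
          by linarith, by linarith, by linarith, by linarith, by linarith, by linarith⟩
  refine ⟨main, fun b hb => ⟨?_, ?_⟩⟩
  · exact main b hb
  · obtain ⟨j, h0, h0', h1, h1', h2, h2', h3, h3', h4, h4', h24⟩ := hb
    intro i
    rcases cover i j with h | h | h | h | h <;> subst h <;> constructor <;> linarith
end

section
/- A winning region gives an infinite safe play: if W satisfies W ⊆ WP(W) ∩ G and s₀ ∈ W, then there exist sequences of states (sᵢ) and (tᵢ) with s₀ given, Con sᵢ tᵢ, tᵢ ∈ G, sᵢ ∈ W ⊆ G for all i, and whenever Env tᵢ s exists, all such s can be chosen/are forced to be in W — formally, there is a function σ : W → S with Con w (σ w), σ w ∈ G, and ∀ s'', Env (σ w) s'' → s'' ∈ W, so that any play following σ stays in G forever. -/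
def WP {S : Type*} (Con Env : S → S → Prop) (G : Set S) (X : Set S) : Set S :=
  {s | ∃ s', Con s s' ∧ s' ∈ G ∧ ∀ s'', Env s' s'' → s'' ∈ X}

theorem winning_region_gives_strategy {S : Type*} (Con Env : S → S → Prop) (G : Set S)
    (W : Set S) (hW : W ⊆ WP Con Env G W ∩ G) (s₀ : S) (hs₀ : s₀ ∈ W) :
    ∃ σ : S → S,
      (∀ w ∈ W, Con w (σ w) ∧ σ w ∈ G ∧ ∀ s'', Env (σ w) s'' → s'' ∈ W) ∧
      (∀ s : ℕ → S, s 0 = s₀ → (∀ i, Env (σ (s i)) (s (i + 1))) →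
        ∀ i, s i ∈ W ∧ s i ∈ G ∧ σ (s i) ∈ G) := by
  classical
  have hchoice : ∀ w : S, ∃ t : S, w ∈ W → Con w t ∧ t ∈ G ∧ ∀ s'', Env t s'' → s'' ∈ W := by
    intro w
    by_cases hw : w ∈ W
    · obtain ⟨⟨t, ht⟩, _⟩ := hW hw
      exact ⟨t, fun _ => ht⟩
    · exact ⟨w, fun h => absurd h hw⟩
  choose σ hσ using hchoice
  refine ⟨σ, fun w hw => hσ w hw, ?_⟩
  intro s h0 henv
  have key : ∀ i, s i ∈ W := by
    intro i
    induction i with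
    | zero => rwa [h0]
    | succ n ih => exact (hσ _ ih).2.2 _ (henv n)
  intro i
  exact ⟨key i, (hW (key i)).2, (hσ _ (key i)).2.1⟩
end
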